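/- Let C₁,…,C_M be 4×4 real symmetric matrices and T₁,…,T_M homogeneous pose matrices T_j = [[R_j, t_j],[0, 1]] with R_jᵀR_j = I and det R_j = 1, such that the (4,4)-entry of Σⱼ T_j C_j T_jᵀ is positive. Fix φ ∈ ℝ³ and δt ∈ ℝ³, and for each j define the perturbed pose T̃_j = [[exp(⌊φ⌋) R_j, δt + exp(⌊φ⌋) t_j],[0, 1]], where ⌊φ⌋ denotes the 3×3 skew-symmetric matrix of φ and exp is the matrix exponential. Then for each l ∈ {1,2,3}: λ_l(A(Σⱼ T̃_j C_j T̃_jᵀ)) = λ_l(A(Σⱼ T_j C_j T_jᵀ)). That is, the bundle adjustment cost is unchanged when all poses are perturbed by the same boxplus increment (φ, δt). -/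

import Mathlib

open Matrix

noncomputable section

/-- Homogeneous coordinates of a point in `ℝ³`. -/
def homog (x : Fin 3 → ℝ) : Fin 4 → ℝ := Fin.snoc x 1

/-- The point cluster coordinate `ℜ(p) = Σₖ (pₖ,1)(pₖ,1)ᵀ` of a finite family of points. -/
def cluster {n : ℕ} (p : Fin n → Fin 3 → ℝ) : Matrix (Fin 4) (Fin 4) ℝ :=
  ∑ k, vecMulVec (homog (p k)) (homog (p k))

/-- The homogeneous pose matrix `T = [[R, t],[0, 1]]`. -/
def pose (R : Matrix (Fin 3) (Fin 3) ℝ) (t : Fin 3 → ℝ) : Matrix (Fin 4) (Fin 4) ℝ :=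
  Matrix.reindex finSumFinEquiv finSumFinEquiv
    (Matrix.fromBlocks R (Matrix.of fun i (_ : Fin 1) => t i)
      (0 : Matrix (Fin 1) (Fin 3) ℝ) (1 : Matrix (Fin 1) (Fin 1) ℝ))

/-- The upper-left `3×3` block `P` of a `4×4` matrix. -/
def Pblk (C : Matrix (Fin 4) (Fin 4) ℝ) : Matrix (Fin 3) (Fin 3) ℝ :=
  Matrix.of fun i j => C i.castSucc j.castSucc

/-- The upper-right `3×1` block `v` of a `4×4` matrix. -/
def vblk (C : Matrix (Fin 4) (Fin 4) ℝ) : Fin 3 → ℝ :=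
  fun i => C i.castSucc (Fin.last 3)

/-- The `(4,4)` entry `N` of a `4×4` matrix. -/
def Nent (C : Matrix (Fin 4) (Fin 4) ℝ) : ℝ := C (Fin.last 3) (Fin.last 3)

/-- `A(C) = (1/N) P − (1/N²) v vᵀ`. -/
def Amat (C : Matrix (Fin 4) (Fin 4) ℝ) : Matrix (Fin 3) (Fin 3) ℝ :=
  (1 / Nent C) • Pblk C - (1 / (Nent C) ^ 2) • vecMulVec (vblk C) (vblk C)

/-- The `l`-th largest eigenvalue (`l = 0` being the largest) of a real symmetric
`3×3` matrix. -/
def eigDesc {A : Matrix (Fin 3) (Fin 3) ℝ} (hA : A.IsHermitian) (l : Fin 3) : ℝ :=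
  (hA.eigenvalues ∘ Tuple.sort hA.eigenvalues) l.rev

/-- The skew-symmetric matrix `⌊φ⌋` of `φ ∈ ℝ³`. -/
def crossMat (φ : Fin 3 → ℝ) : Matrix (Fin 3) (Fin 3) ℝ :=
  !![0, -φ 2, φ 1; φ 2, 0, -φ 0; -φ 1, φ 0, 0]

/-!
A common perturbation `(φ, δt)` replaces every pose `T_j` by `T_δ T_j` with
`T_δ = pose Q δt`, `Q = exp ⌊φ⌋`, so the summed cluster matrix `S` becomes `T_δ S T_δᵀ`.
A direct block computation shows `A(T_δ S T_δᵀ) = Q A(S) Qᵀ`: the translation terms cancel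
in the Schur complement. Since `Q` is orthogonal, this is a similarity, which preserves the
characteristic polynomial and hence the eigenvalues.
-/

theorem Matrix.charpoly_mul_mul_of_mul_eq_one {R n : Type*} [CommRing R] [Fintype n]
    [DecidableEq n] {Q Q' : Matrix n n R} (h : Q' * Q = 1) (A : Matrix n n R) :
    (Q * A * Q').charpoly = A.charpoly := by
  rw [charpoly_mul_comm, ← mul_assoc, h, one_mul]

theorem Matrix.transpose_exp_mul_exp_of_transpose_eq_neg {𝕂 m : Type*} [RCLike 𝕂] [Fintype m]
    [DecidableEq m] {A : Matrix m m 𝕂} (hA : Aᵀ = -A) :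
    (NormedSpace.exp A)ᵀ * NormedSpace.exp A = 1 := by
  rw [← exp_transpose, hA, ← exp_add_of_commute _ _ (Commute.refl A).neg_left, neg_add_cancel,
    NormedSpace.exp_zero]

theorem Matrix.isSymm_sum_mul_mul_transpose {ι n R : Type*} [Fintype ι] [Fintype n]
    [CommSemiring R] (T C : ι → Matrix n n R) (hC : ∀ j, (C j).IsSymm) :
    (∑ j, T j * C j * (T j)ᵀ).IsSymm := by
  simp only [IsSymm, transpose_sum, transpose_mul, transpose_transpose, (hC _).eq, mul_assoc]

theorem crossMat_transpose (φ : Fin 3 → ℝ) : (crossMat φ)ᵀ = -crossMat φ := by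
  ext i j
  fin_cases i <;> fin_cases j <;> simp [crossMat]

section Pose

variable (Q : Matrix (Fin 3) (Fin 3) ℝ) (s : Fin 3 → ℝ)

@[simp]
theorem pose_castSucc_castSucc (i j : Fin 3) : pose Q s i.castSucc j.castSucc = Q i j := by
  simp only [pose, reindex_apply, submatrix_apply, finSumFinEquiv_symm_apply_castSucc]
  rfl

@[simp]
theorem pose_castSucc_last (i : Fin 3) : pose Q s i.castSucc (Fin.last 3) = s i := by
  simp only [pose, reindex_apply, submatrix_apply, finSumFinEquiv_symm_apply_castSucc,
    finSumFinEquiv_symm_last]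
  rfl

@[simp]
theorem pose_last_castSucc (j : Fin 3) : pose Q s (Fin.last 3) j.castSucc = 0 := by
  simp only [pose, reindex_apply, submatrix_apply, finSumFinEquiv_symm_apply_castSucc,
    finSumFinEquiv_symm_last]
  rfl

@[simp]
theorem pose_last_last : pose Q s (Fin.last 3) (Fin.last 3) = 1 := by
  simp only [pose, reindex_apply, submatrix_apply, finSumFinEquiv_symm_last]
  rfl

theorem pose_mul (R : Matrix (Fin 3) (Fin 3) ℝ) (t : Fin 3 → ℝ) :
    pose Q s * pose R t = pose (Q * R) (s + Q *ᵥ t) := by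
  ext i j
  induction i using Fin.lastCases <;> induction j using Fin.lastCases <;>
    simp only [mul_apply, Fin.sum_univ_castSucc, pose_castSucc_castSucc, pose_castSucc_last,
      pose_last_castSucc, pose_last_last] <;>
    simp [mulVec, dotProduct, Fin.sum_univ_three, add_comm]

variable (S : Matrix (Fin 4) (Fin 4) ℝ)

theorem Nent_pose_conj : Nent (pose Q s * S * (pose Q s)ᵀ) = Nent S := by
  simp only [Nent, mul_apply, transpose_apply, Fin.sum_univ_castSucc, pose_last_castSucc,
    pose_last_last]
  simp

theorem vblk_pose_conj : vblk (pose Q s * S * (pose Q s)ᵀ) = Q *ᵥ vblk S + Nent S • s := by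
  ext i
  simp only [vblk, Nent, mul_apply, transpose_apply, Fin.sum_univ_castSucc, pose_castSucc_castSucc,
    pose_castSucc_last, pose_last_castSucc, pose_last_last]
  simp [mulVec, dotProduct, Fin.sum_univ_three, vblk, mul_comm]

theorem Pblk_pose_conj (hS : S.IsSymm) :
    Pblk (pose Q s * S * (pose Q s)ᵀ) = Q * Pblk S * Qᵀ + vecMulVec (Q *ᵥ vblk S) s
      + vecMulVec s (Q *ᵥ vblk S) + Nent S • vecMulVec s s := by
  ext i j
  simp only [Pblk, Nent, of_apply, mul_apply, transpose_apply, Fin.sum_univ_castSucc (n := 3),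
    pose_castSucc_castSucc, pose_castSucc_last, hS.apply _ (Fin.last 3)]
  simp only [Fin.sum_univ_three, Matrix.add_apply, Matrix.smul_apply, mul_apply, of_apply,
    transpose_apply, vecMulVec_apply, mulVec, dotProduct, vblk, smul_eq_mul]
  ring

theorem Amat_pose_conj (hS : S.IsSymm) :
    Amat (pose Q s * S * (pose Q s)ᵀ) = Q * Amat S * Qᵀ := by
  rw [Amat, Amat, Nent_pose_conj, vblk_pose_conj, Pblk_pose_conj Q s S hS]
  by_cases hN : Nent S = 0
  · -- both sides vanish, since `1 / 0 = 0`
    simp [hN]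
  ext i j
  simp only [one_div, smul_add, Matrix.sub_apply, Matrix.add_apply, Matrix.smul_apply, mul_apply,
    Fin.sum_univ_three, transpose_apply, smul_eq_mul, vecMulVec_apply, mulVec, dotProduct,
    Pi.add_apply, Pi.smul_apply]
  field_simp
  ring

end Pose

theorem sum_pose_mul_conj {M : ℕ} (Q : Matrix (Fin 3) (Fin 3) ℝ) (s : Fin 3 → ℝ)
    (R : Fin M → Matrix (Fin 3) (Fin 3) ℝ) (t : Fin M → Fin 3 → ℝ)
    (C : Fin M → Matrix (Fin 4) (Fin 4) ℝ) :
    ∑ j, pose (Q * R j) (s + Q *ᵥ t j) * C j * (pose (Q * R j) (s + Q *ᵥ t j))ᵀ =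
      pose Q s * (∑ j, pose (R j) (t j) * C j * (pose (R j) (t j))ᵀ) * (pose Q s)ᵀ := by
  simp only [Finset.mul_sum, Finset.sum_mul, ← pose_mul, transpose_mul, mul_assoc]

theorem cost_invariant_common_perturbation_general {M : ℕ}
    (C : Fin M → Matrix (Fin 4) (Fin 4) ℝ) (hC : ∀ j, (C j).IsSymm)
    (R : Fin M → Matrix (Fin 3) (Fin 3) ℝ) (t : Fin M → Fin 3 → ℝ)
    (φ : Fin 3 → ℝ) (δt : Fin 3 → ℝ)
    (h₁ : (Amat (∑ j,
        pose (NormedSpace.exp (crossMat φ) * R j)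
            (δt + (NormedSpace.exp (crossMat φ)).mulVec (t j)) * C j *
          (pose (NormedSpace.exp (crossMat φ) * R j)
            (δt + (NormedSpace.exp (crossMat φ)).mulVec (t j)))ᵀ)).IsHermitian)
    (h₂ : (Amat (∑ j, pose (R j) (t j) * C j * (pose (R j) (t j))ᵀ)).IsHermitian) :
    ∀ l : Fin 3, eigDesc h₁ l = eigDesc h₂ l := by
  have hQ := transpose_exp_mul_exp_of_transpose_eq_neg (crossMat_transpose φ)
  intro l
  simp only [eigDesc, (h₁.eigenvalues_eq_eigenvalues_iff h₂).2 (by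
    rw [sum_pose_mul_conj, Amat_pose_conj _ _ _ (isSymm_sum_mul_mul_transpose _ C hC),
      charpoly_mul_mul_of_mul_eq_one hQ])]

/-- Null space (claim (45) of Theorem 4, cost level): the BA cost is unchanged when
all poses are perturbed by the same boxplus increment `(φ, δt)`. -/
theorem cost_invariant_common_perturbation {M : ℕ}
    (C : Fin M → Matrix (Fin 4) (Fin 4) ℝ) (hC : ∀ j, (C j).IsSymm)
    (R : Fin M → Matrix (Fin 3) (Fin 3) ℝ) (t : Fin M → Fin 3 → ℝ)
    (hR : ∀ j, (R j)ᵀ * R j = 1) (hdet : ∀ j, (R j).det = 1)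
    (hN : 0 < Nent (∑ j, pose (R j) (t j) * C j * (pose (R j) (t j))ᵀ))
    (φ : Fin 3 → ℝ) (δt : Fin 3 → ℝ)
    (h₁ : (Amat (∑ j,
        pose (NormedSpace.exp (crossMat φ) * R j)
            (δt + (NormedSpace.exp (crossMat φ)).mulVec (t j)) * C j *
          (pose (NormedSpace.exp (crossMat φ) * R j)
            (δt + (NormedSpace.exp (crossMat φ)).mulVec (t j)))ᵀ)).IsHermitian)
    (h₂ : (Amat (∑ j, pose (R j) (t j) * C j * (pose (R j) (t j))ᵀ)).IsHermitian) :
    ∀ l : Fin 3, eigDesc h₁ l = eigDesc h₂ l :=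
  cost_invariant_common_perturbation_general C hC R t φ δt h₁ h₂
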